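/- arXiv:2207.11424 — 2 statements merged into one kernel-verified Lean document; each statement's English description precedes it below -/
import Mathlib

section
/- Let r, s > 1 and α ∈ (0, N) satisfy 1/r + 1/s + (N−α)/N = 2. Then there is a constant C = C(r, s, α, c₂, C₁, C₂) > 0 such that for all f ∈ ℓ^r(G) and g ∈ ℓ^s(G), the discrete Hardy–Littlewood–Sobolev inequality holds: ∑_{x,y ∈ G, x ≠ y} R_α(x,y)·|f(x)|·|g(y)| ≤ C·‖f‖_r·‖g‖_s. -/
/-!
Normalise `‖f‖_r = ‖g‖_s = 1` and split `|f|`, `|g|` into dyadic layers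
`A_m = {2^m ≤ |f| < 2^(m+1)}`, `B_n = {2^n ≤ |g| < 2^(n+1)}`; Chebyshev gives
`∑_m 2^(mr) #A_m ≤ 1` and `∑_n 2^(ns) #B_n ≤ 1`.
Polynomial growth bounds the kernel on any finite set: `∑_{y ∈ T} d(x,y)^(α-N) ≲ #T^(α/N)`
(sum over dyadic shells, cut at the radius whose ball has about `#T` points). So the kernel mass
between two layers is `≲ min (#A_m #B_n^(α/N)) (#B_n #A_m^(α/N))`, and the relation
`1/r + 1/s = 1 + α/N` turns the sum over `(m, n)` of `2^(m+n)` times this, split along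
`ns = mr`, into two geometric series.
All sums are taken in `ℝ≥0∞`, so no summability bookkeeping is needed before the final passage
to `ℝ`.
-/

open Filter Topology

noncomputable section

namespace Choquard

variable {G : Type*}

/-- The word metric on the Cayley graph of `(G, S)`: the least `k` such that
`y = x * s₁ * ⋯ * s_k` with each `sᵢ ∈ S`. -/
def wordDist [Group G] (S : Finset G) (x y : G) : ℕ :=
  sInf {k : ℕ | ∃ l : List G, (∀ s ∈ l, s ∈ S) ∧ l.length = k ∧ y = x * l.prod}

/-- Convolution against a kernel: `(R ∗ f)(x) = ∑_{y ∈ G} R(x,y) f(y)`. -/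
def conv (R : G → G → ℝ) (f : G → ℝ) (x : G) : ℝ := ∑' y, R x y * f y

/-- The `ℓ^q(G)` norm of `u`. -/
def lpNorm (q : ℝ) (u : G → ℝ) : ℝ := (∑' x, |u x| ^ q) ^ (1 / q)

/-- `u ∈ ℓ^q(G)`. -/
def Memlp (q : ℝ) (u : G → ℝ) : Prop := Summable fun x : G => |u x| ^ q

/-- `|∇u(x)|_p^p = ∑_{y ∼ x} |u(y) − u(x)|^p`, where `y ∼ x` iff `y = x * s`, `s ∈ S`. -/
def gradP [Group G] (S : Finset G) (p : ℝ) (u : G → ℝ) (x : G) : ℝ :=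
  ∑ s ∈ S, |u (x * s) - u x| ^ p

/-- The `D^{1,p}` norm `(∑_x ∑_{y ∼ x} |u(y) − u(x)|^p)^{1/p}`. -/
def D1Norm [Group G] (S : Finset G) (p : ℝ) (u : G → ℝ) : ℝ :=
  (∑' x, gradP S p u x) ^ (1 / p)

/-- `u ∈ D^{1,p}(G) = {u ∈ ℓ^{Np/(N−p)}(G) : ‖u‖_{D^{1,p}} < ∞}`. -/
def MemD1p [Group G] (S : Finset G) (N : ℕ) (p : ℝ) (u : G → ℝ) : Prop :=
  Memlp ((N : ℝ) * p / ((N : ℝ) - p)) u ∧ Summable (gradP S p u)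

/-- `|∇u(x)|₂² = ∑_{y ∼ x} (u(y) − u(x))²`. -/
def gradSq [Group G] (S : Finset G) (u : G → ℝ) (x : G) : ℝ :=
  ∑ s ∈ S, (u (x * s) - u x) ^ 2

/-- The `D^{1,2}` norm. -/
def D12Norm [Group G] (S : Finset G) (u : G → ℝ) : ℝ :=
  (∑' x, gradSq S u x) ^ ((1 : ℝ) / 2)

/-- `u ∈ D^{1,2}(G) = {u ∈ ℓ^{2N/(N−2)}(G) : ‖u‖_{D^{1,2}} < ∞}`. -/
def MemD12 [Group G] (S : Finset G) (N : ℕ) (u : G → ℝ) : Prop :=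
  Memlp (2 * (N : ℝ) / ((N : ℝ) - 2)) u ∧ Summable (gradSq S u)

/-- The graph Laplacian `Δu(x) = ∑_{y ∼ x} (u(y) − u(x))`. -/
def lap [Group G] (S : Finset G) (u : G → ℝ) (x : G) : ℝ :=
  ∑ s ∈ S, (u (x * s) - u x)

/-- `u ∈ D^{2,2}(G) = {u ∈ ℓ^{2N/(N−4)}(G) : ‖Δu‖_{ℓ²} < ∞}`. -/
def MemD22 [Group G] (S : Finset G) (N : ℕ) (u : G → ℝ) : Prop :=
  Memlp (2 * (N : ℝ) / ((N : ℝ) - 4)) u ∧ Summable fun x => (lap S u x) ^ 2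

/-- `u ∈ D^{2,p}(G) = {u ∈ ℓ^{Np/(N−2p)}(G) : ‖Δu‖_{ℓ^p} < ∞}`. -/
def MemD2p [Group G] (S : Finset G) (N : ℕ) (p : ℝ) (u : G → ℝ) : Prop :=
  Memlp ((N : ℝ) * p / ((N : ℝ) - 2 * p)) u ∧ Summable fun x => |lap S u x| ^ p

/-- The nonlocal energy `∑_{x ∈ G} (R_α ∗ |u|^p)(x) |u(x)|^p`. -/
def energy (R : G → G → ℝ) (p : ℝ) (u : G → ℝ) : ℝ :=
  ∑' x, conv R (fun y => |u y| ^ p) x * |u x| ^ p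

/-- The optimal constant `K` of the Sobolev-type inequality. -/
def bestK [Group G] (S : Finset G) (N : ℕ) (R : G → G → ℝ) (p : ℝ) : ℝ :=
  sSup {t : ℝ | ∃ u : G → ℝ, MemD12 S N u ∧ D12Norm S u = 1 ∧ t = energy R p u}

/-- The discrete `p`-Laplacian. -/
def pLap [Group G] (S : Finset G) (p : ℝ) (u : G → ℝ) (x : G) : ℝ :=
  ∑ s ∈ S, |u (x * s) - u x| ^ (p - 2) * (u (x * s) - u x)

/-- The cutoff `Ψ_r`, the indicator of `{x : d(x,e) ≥ r + 1}`. -/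
def cutoff [Group G] (S : Finset G) (r : ℕ) (x : G) : ℝ :=
  if r + 1 ≤ wordDist S 1 x then 1 else 0


open scoped ENNReal
open Finset

lemma two_rpow_add (a b : ℝ) : (2 : ℝ≥0∞) ^ (a + b) = 2 ^ a * 2 ^ b :=
  ENNReal.rpow_add a b two_ne_zero ENNReal.ofNat_ne_top

lemma exists_eq_two_rpow {A : ℝ≥0∞} (h0 : A ≠ 0) (htop : A ≠ ⊤) : ∃ u : ℝ, A = 2 ^ u := by
  refine ⟨Real.logb 2 A.toReal, ?_⟩
  rw [← ENNReal.ofReal_ofNat 2, ENNReal.ofReal_rpow_of_pos two_pos,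
    Real.rpow_logb two_pos (by norm_num) (ENNReal.toReal_pos h0 htop), ENNReal.ofReal_toReal htop]

lemma tsum_ite_le_two_rpow_le {t c : ℝ} (ht : 0 < t) (hc : 0 < c) (u : ℝ) :
    ∑' n : ℤ, (if n * t ≤ u then (2 : ℝ≥0∞) ^ ((n * t - u) * c) else 0) ≤
      (1 - 2 ^ (-(t * c)))⁻¹ := by
  set f : ℤ → ℝ≥0∞ := fun n => if n * t ≤ u then 2 ^ ((n * t - u) * c) else 0
  set n₀ : ℤ := ⌊u / t⌋
  have hle : ∀ {n : ℤ}, n * t ≤ u → n ≤ n₀ := fun h =>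
    Int.le_floor.mpr ((le_div_iff₀ ht).mpr h)
  have hsupp : Function.support f ⊆ Set.range fun k : ℕ => n₀ - k := by
    intro n hn
    have hn : n * t ≤ u := by by_contra h; exact hn (if_neg h)
    exact ⟨(n₀ - n).toNat, by simp [Int.toNat_of_nonneg (sub_nonneg.mpr (hle hn))]⟩
  rw [← (sub_right_injective.comp Nat.cast_injective).tsum_eq hsupp, ← ENNReal.tsum_geometric]
  refine ENNReal.tsum_le_tsum fun k => ?_
  simp only [f, Function.comp_apply]
  split_ifs with h
  · rw [← ENNReal.rpow_natCast, ← ENNReal.rpow_mul]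
    refine ENNReal.rpow_le_rpow_of_exponent_le one_le_two ?_
    have : (n₀ : ℝ) * t ≤ u := (le_div_iff₀ ht).mp (Int.floor_le _)
    push_cast
    nlinarith
  · exact zero_le

lemma tsum_ite_ge_two_rpow_le {t c : ℝ} (ht : 0 < t) (hc : 0 < c) (u : ℝ) :
    ∑' n : ℤ, (if u ≤ n * t then (2 : ℝ≥0∞) ^ ((u - n * t) * c) else 0) ≤
      (1 - 2 ^ (-(t * c)))⁻¹ := by
  rw [← (Equiv.neg ℤ).tsum_eq]
  convert tsum_ite_le_two_rpow_le ht hc (-u) using 3 with n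
  simp only [Equiv.neg_apply, Int.cast_neg, neg_mul]
  congr 1
  · exact propext le_neg
  · ring_nf

lemma inv_one_sub_two_rpow_ne_top {a : ℝ} (ha : a < 0) : (1 - (2 : ℝ≥0∞) ^ a)⁻¹ ≠ ⊤ := by
  rw [ENNReal.inv_ne_top, ne_eq, tsub_eq_zero_iff_le, not_le]
  exact ENNReal.rpow_lt_one_of_one_lt_of_neg (by norm_num) ha

lemma tsum_min_mul_two_rpow_le {α : ℝ} {N : ℕ} (hα : 0 < α) (hαN : α < N) (D : ℝ≥0∞)
    {A : ℝ≥0∞} (hA0 : A ≠ 0) (hAtop : A ≠ ⊤) :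
    ∑' n : ℤ, min A (D * 2 ^ ((n : ℝ) * N)) * 2 ^ ((n : ℝ) * (α - N)) ≤
      (D * (1 - 2 ^ (-α))⁻¹ + (1 - 2 ^ (α - N))⁻¹) * A ^ (α / N) := by
  obtain ⟨u, rfl⟩ := exists_eq_two_rpow hA0 hAtop
  have hN : (0 : ℝ) < N := hα.trans hαN
  have hθ : 0 < α / N := div_pos hα hN
  have hθ' : 0 < 1 - α / N := by rw [sub_pos, div_lt_one hN]; exact hαN
  rw [← ENNReal.rpow_mul]
  have split : ∀ n : ℤ, min (2 ^ u) (D * 2 ^ ((n : ℝ) * N)) * 2 ^ ((n : ℝ) * (α - N)) ≤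
      D * 2 ^ (u * (α / N)) * (if n * (N : ℝ) ≤ u then 2 ^ ((n * N - u) * (α / N)) else 0) +
      2 ^ (u * (α / N)) * (if u ≤ n * (N : ℝ) then 2 ^ ((u - n * N) * (1 - α / N)) else 0) := by
    intro n
    by_cases h : n * (N : ℝ) ≤ u
    · rw [if_pos h]
      refine le_add_right ?_
      calc _ ≤ D * 2 ^ ((n : ℝ) * N) * 2 ^ ((n : ℝ) * (α - N)) := by gcongr; exact min_le_right _ _
        _ = _ := by
          rw [mul_assoc, mul_assoc, ← two_rpow_add, ← two_rpow_add]
          congr 2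
          field_simp
          ring
    · rw [if_pos (not_le.mp h).le]
      refine le_add_left ?_
      calc _ ≤ (2 : ℝ≥0∞) ^ u * 2 ^ ((n : ℝ) * (α - N)) := by gcongr; exact min_le_left _ _
        _ = _ := by
          rw [← two_rpow_add, ← two_rpow_add]
          congr 1
          field_simp
          ring
  refine (ENNReal.tsum_le_tsum split).trans ?_
  rw [ENNReal.tsum_add, ENNReal.tsum_mul_left, ENNReal.tsum_mul_left]
  have h₁ := tsum_ite_le_two_rpow_le hN hθ u
  have h₂ := tsum_ite_ge_two_rpow_le hN hθ' u
  rw [show (N : ℝ) * (α / N) = α by field_simp] at h₁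
  rw [show -((N : ℝ) * (1 - α / N)) = α - N by field_simp; ring] at h₂
  calc _ ≤ D * 2 ^ (u * (α / N)) * (1 - 2 ^ (-α))⁻¹ + 2 ^ (u * (α / N)) * (1 - 2 ^ (α - N))⁻¹ := by
        gcongr
    _ = _ := by ring

lemma ofReal_natCast_rpow_le_two_rpow_log {γ : ℝ} (hγ : γ < 0) (k : ℕ) :
    ENNReal.ofReal ((k : ℝ) ^ γ) ≤ 2 ^ ((Nat.log 2 k : ℝ) * γ) := by
  -- `Real.rpow` has `0 ^ γ = 0`, so a point at distance `0` (the diagonal) contributes nothing.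
  rcases Nat.eq_zero_or_pos k with rfl | hk
  · simp [Real.zero_rpow hγ.ne]
  rw [← ENNReal.ofReal_ofNat 2, ENNReal.ofReal_rpow_of_pos two_pos, Real.rpow_mul zero_le_two]
  refine ENNReal.ofReal_le_ofReal (Real.rpow_le_rpow_of_nonpos (by positivity) ?_ hγ.le)
  exact_mod_cast Nat.pow_log_le_self 2 hk.ne'

lemma card_filter_log_eq_le {ι : Type*} {ρ : ι → ℕ} {T : Finset ι} {D : ℝ≥0∞} {N : ℕ}
    (hball : ∀ n : ℕ, 1 ≤ n → (#{y ∈ T | ρ y ≤ n} : ℝ≥0∞) ≤ D * n ^ N) (j : ℕ) :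
    (#{y ∈ T | Nat.log 2 (ρ y) = j} : ℝ≥0∞) ≤ D * 2 ^ N * 2 ^ ((j : ℝ) * N) := by
  have hsub : {y ∈ T | Nat.log 2 (ρ y) = j} ⊆ {y ∈ T | ρ y ≤ 2 ^ (j + 1)} := by
    intro y
    simp only [mem_filter]
    rintro ⟨hyT, rfl⟩
    exact ⟨hyT, (Nat.lt_pow_succ_log_self one_lt_two _).le⟩
  calc _ ≤ (#{y ∈ T | ρ y ≤ 2 ^ (j + 1)} : ℝ≥0∞) := by exact_mod_cast card_le_card hsub
    _ ≤ D * ((2 ^ (j + 1) : ℕ) : ℝ≥0∞) ^ N := hball _ Nat.one_le_two_pow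
    _ = _ := by
      rw [mul_assoc, ← ENNReal.rpow_natCast, ← ENNReal.rpow_natCast 2 N, ← two_rpow_add]
      push_cast
      rw [← ENNReal.rpow_natCast, ← ENNReal.rpow_mul]
      congr 2
      push_cast
      ring

lemma sum_ofReal_rpow_le_of_card_le {ι : Type*} {α : ℝ} {N : ℕ} (hα : 0 < α) (hαN : α < N)
    (ρ : ι → ℕ) (T : Finset ι) (D : ℝ≥0∞)
    (hball : ∀ n : ℕ, 1 ≤ n → (#{y ∈ T | ρ y ≤ n} : ℝ≥0∞) ≤ D * n ^ N) :
    ∑ y ∈ T, ENNReal.ofReal ((ρ y : ℝ) ^ (α - N)) ≤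
      (D * 2 ^ N * (1 - 2 ^ (-α))⁻¹ + (1 - 2 ^ (α - N))⁻¹) * (#T : ℝ≥0∞) ^ (α / N) := by
  rcases T.eq_empty_or_nonempty with rfl | hT
  · simp
  set ℓ : ι → ℕ := fun y => Nat.log 2 (ρ y)
  have shell (j : ℕ) : ∑ y ∈ T with ℓ y = j, ENNReal.ofReal ((ρ y : ℝ) ^ (α - N)) ≤
      min (#T : ℝ≥0∞) (D * 2 ^ N * 2 ^ ((j : ℝ) * N)) * 2 ^ ((j : ℝ) * (α - N)) :=
    calc _ ≤ ∑ y ∈ T with ℓ y = j, (2 : ℝ≥0∞) ^ ((j : ℝ) * (α - N)) :=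
          sum_le_sum fun y hy => (mem_filter.mp hy).2 ▸
            ofReal_natCast_rpow_le_two_rpow_log (by linarith) (ρ y)
      _ = #{y ∈ T | ℓ y = j} * 2 ^ ((j : ℝ) * (α - N)) := by rw [sum_const, nsmul_eq_mul]
      _ ≤ _ := by
        gcongr
        exact le_min (by exact_mod_cast card_filter_le _ _) (card_filter_log_eq_le hball j)
  calc ∑ y ∈ T, _ = ∑ j ∈ T.image ℓ, ∑ y ∈ T with ℓ y = j, ENNReal.ofReal ((ρ y : ℝ) ^ (α - N)) :=
        (sum_fiberwise_of_maps_to (fun y hy => mem_image_of_mem ℓ hy) _).symm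
    _ ≤ ∑' j : ℕ, ∑ y ∈ T with ℓ y = j, ENNReal.ofReal ((ρ y : ℝ) ^ (α - N)) :=
        ENNReal.sum_le_tsum _
    _ ≤ ∑' j : ℕ, min (#T : ℝ≥0∞) (D * 2 ^ N * 2 ^ ((j : ℝ) * N)) * 2 ^ ((j : ℝ) * (α - N)) :=
        ENNReal.tsum_le_tsum shell
    _ ≤ ∑' n : ℤ, min (#T : ℝ≥0∞) (D * 2 ^ N * 2 ^ ((n : ℝ) * N)) * 2 ^ ((n : ℝ) * (α - N)) := by
        simpa using ENNReal.tsum_comp_le_tsum_of_injective Nat.cast_injective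
          (fun n : ℤ => min (#T : ℝ≥0∞) (D * 2 ^ N * 2 ^ ((n : ℝ) * N)) * 2 ^ ((n : ℝ) * (α - N)))
    _ ≤ _ := tsum_min_mul_two_rpow_le hα hαN _ (by simpa using hT.card_pos.ne') (by simp)

def dyadicLevel (a : ℝ≥0∞) : ℤ := Int.log 2 a.toReal

lemma two_rpow_intCast_eq_ofReal (m : ℤ) : (2 : ℝ≥0∞) ^ (m : ℝ) = ENNReal.ofReal (2 ^ m) := by
  rw [← ENNReal.ofReal_ofNat 2, ENNReal.ofReal_rpow_of_pos two_pos, Real.rpow_intCast]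

lemma two_rpow_dyadicLevel_le {a : ℝ≥0∞} (h0 : a ≠ 0) :
    (2 : ℝ≥0∞) ^ (dyadicLevel a : ℝ) ≤ a := by
  rcases eq_or_ne a ⊤ with rfl | htop
  · exact le_top
  have := Int.zpow_log_le_self (R := ℝ) one_lt_two (ENNReal.toReal_pos h0 htop)
  calc _ = ENNReal.ofReal (2 ^ dyadicLevel a) := two_rpow_intCast_eq_ofReal _
    _ ≤ ENNReal.ofReal a.toReal := ENNReal.ofReal_le_ofReal (by exact_mod_cast this)
    _ = a := ENNReal.ofReal_toReal htop

lemma lt_two_rpow_dyadicLevel_add_one {a : ℝ≥0∞} (htop : a ≠ ⊤) :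
    a < (2 : ℝ≥0∞) ^ ((dyadicLevel a : ℝ) + 1) := by
  have := Int.lt_zpow_succ_log_self (R := ℝ) one_lt_two a.toReal
  calc a = ENNReal.ofReal a.toReal := (ENNReal.ofReal_toReal htop).symm
    _ < ENNReal.ofReal (2 ^ (dyadicLevel a + 1)) :=
        (ENNReal.ofReal_lt_ofReal_iff (by positivity)).mpr (by exact_mod_cast this)
    _ = _ := by rw [← two_rpow_intCast_eq_ofReal]; push_cast; rfl


lemma tsum_tsum_ite_two_rpow_mul_le {r s θ : ℝ} (hr : 1 < r) (hs : 0 < s) (hθ : 0 ≤ θ)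
    (hrs : r⁻¹ + s⁻¹ = 1 + θ) (a b : ℤ → ℝ≥0∞)
    (ha : ∑' m : ℤ, 2 ^ ((m : ℝ) * r) * a m ≤ 1) (hb : ∀ n : ℤ, 2 ^ ((n : ℝ) * s) * b n ≤ 1) :
    ∑' m : ℤ, ∑' n : ℤ,
      (if (n : ℝ) * s ≤ m * r then (2 : ℝ≥0∞) ^ (m : ℝ) * 2 ^ (n : ℝ) * (a m * b n ^ θ) else 0) ≤
      (1 - 2 ^ (-(s * (1 - r⁻¹))))⁻¹ := by
  have hc : 0 < 1 - r⁻¹ := sub_pos.mpr (inv_lt_one_of_one_lt₀ hr)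
  have term : ∀ m n : ℤ,
      (if (n : ℝ) * s ≤ m * r then (2 : ℝ≥0∞) ^ (m : ℝ) * 2 ^ (n : ℝ) * (a m * b n ^ θ) else 0) ≤
      2 ^ ((m : ℝ) * r) * a m *
        (if (n : ℝ) * s ≤ m * r then 2 ^ ((n * s - m * r) * (1 - r⁻¹)) else 0) := by
    intro m n
    split_ifs
    · have hbn : b n ^ θ ≤ 2 ^ (-((n : ℝ) * s) * θ) := by
        rw [ENNReal.rpow_mul, ENNReal.rpow_neg]
        exact ENNReal.rpow_le_rpow (ENNReal.le_inv_iff_mul_le.mpr (by rw [mul_comm]; exact hb n)) hθ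
      calc _ ≤ (2 : ℝ≥0∞) ^ (m : ℝ) * 2 ^ (n : ℝ) * (a m * 2 ^ (-((n : ℝ) * s) * θ)) := by gcongr
        _ = _ := by
          rw [mul_comm _ (a m), ← mul_assoc, mul_comm _ (a m), mul_assoc, mul_assoc, mul_assoc,
            ← two_rpow_add, ← two_rpow_add, ← two_rpow_add]
          congr 2
          rw [show θ = r⁻¹ + s⁻¹ - 1 by linarith]
          field_simp
          ring
    · simp
  calc _ ≤ ∑' m : ℤ, ∑' n : ℤ, 2 ^ ((m : ℝ) * r) * a m *
          (if (n : ℝ) * s ≤ m * r then (2 : ℝ≥0∞) ^ ((n * s - m * r) * (1 - r⁻¹)) else 0) :=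
        ENNReal.tsum_le_tsum fun m => ENNReal.tsum_le_tsum (term m)
    _ ≤ ∑' m : ℤ, 2 ^ ((m : ℝ) * r) * a m * (1 - 2 ^ (-(s * (1 - r⁻¹))))⁻¹ := by
        simp_rw [ENNReal.tsum_mul_left]
        gcongr with m
        exact tsum_ite_le_two_rpow_le hs hc _
    _ ≤ 1 * (1 - 2 ^ (-(s * (1 - r⁻¹))))⁻¹ := by rw [ENNReal.tsum_mul_right]; gcongr
    _ = _ := one_mul _

lemma tsum_tsum_two_rpow_mul_min_le {r s θ : ℝ} (hr : 1 < r) (hs : 1 < s) (hθ : 0 ≤ θ)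
    (hrs : r⁻¹ + s⁻¹ = 1 + θ) (a b : ℤ → ℝ≥0∞)
    (ha : ∑' m : ℤ, 2 ^ ((m : ℝ) * r) * a m ≤ 1) (hb : ∑' n : ℤ, 2 ^ ((n : ℝ) * s) * b n ≤ 1) :
    ∑' m : ℤ, ∑' n : ℤ, (2 : ℝ≥0∞) ^ (m : ℝ) * 2 ^ (n : ℝ) * min (a m * b n ^ θ) (b n * a m ^ θ) ≤
      (1 - 2 ^ (-(s * (1 - r⁻¹))))⁻¹ + (1 - 2 ^ (-(r * (1 - s⁻¹))))⁻¹ := by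
  have split : ∀ m n : ℤ,
      (2 : ℝ≥0∞) ^ (m : ℝ) * 2 ^ (n : ℝ) * min (a m * b n ^ θ) (b n * a m ^ θ) ≤
        (if (n : ℝ) * s ≤ m * r then (2 : ℝ≥0∞) ^ (m : ℝ) * 2 ^ (n : ℝ) * (a m * b n ^ θ) else 0) +
        (if (m : ℝ) * r ≤ n * s then 2 ^ (n : ℝ) * 2 ^ (m : ℝ) * (b n * a m ^ θ) else 0) := by
    intro m n
    by_cases h : (n : ℝ) * s ≤ m * r
    · rw [if_pos h]
      exact le_add_right (by gcongr; exact min_le_left _ _)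
    · rw [if_pos (not_le.mp h).le, mul_comm ((2 : ℝ≥0∞) ^ (n : ℝ))]
      exact le_add_left (by gcongr; exact min_le_right _ _)
  refine (ENNReal.tsum_le_tsum fun m => ENNReal.tsum_le_tsum (split m)).trans ?_
  simp_rw [ENNReal.tsum_add]
  rw [ENNReal.tsum_comm (f := fun (m n : ℤ) => if (m : ℝ) * r ≤ n * s then _ else _)]
  exact add_le_add (tsum_tsum_ite_two_rpow_mul_le hr (by linarith) hθ hrs a b ha
      fun n => (ENNReal.le_tsum n).trans hb)
    (tsum_tsum_ite_two_rpow_mul_le hs (by linarith) hθ (by rw [add_comm]; exact hrs) b a hb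
      fun m => (ENNReal.le_tsum m).trans ha)

section Bilinear

variable {X : Type*} {κ : X → X → ℝ≥0∞} {K : ℝ≥0∞} {θ : ℝ}

lemma tsum_subtype_le_encard_rpow {k : X → ℝ≥0∞} (hθ : 0 ≤ θ)
    (hk : ∀ T : Finset X, ∑ y ∈ T, k y ≤ K * (#T : ℝ≥0∞) ^ θ) (B : Set X) :
    ∑' y : B, k y ≤ K * (B.encard : ℝ≥0∞) ^ θ := by
  rw [ENNReal.tsum_eq_iSup_sum]
  refine iSup_le fun t => ?_
  refine (sum_map t (Function.Embedding.subtype _) k).symm.le.trans ((hk _).trans ?_)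
  gcongr
  have hsub : ((t.map (Function.Embedding.subtype _) : Finset X) : Set X) ⊆ B := by
    intro y hy
    obtain ⟨z, -, rfl⟩ := mem_map.mp hy
    exact z.2
  rw [← ENat.toENNReal_coe, ENat.toENNReal_le, ← Set.encard_coe_eq_coe_finsetCard]
  exact Set.encard_le_encard hsub

lemma tsum_tsum_subtype_le_min (hθ : 0 ≤ θ)
    (hrow : ∀ x (T : Finset X), ∑ y ∈ T, κ x y ≤ K * (#T : ℝ≥0∞) ^ θ)
    (hcol : ∀ y (T : Finset X), ∑ x ∈ T, κ x y ≤ K * (#T : ℝ≥0∞) ^ θ) (A B : Set X) :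
    ∑' x : A, ∑' y : B, κ x y ≤
      K * min (A.encard * (B.encard : ℝ≥0∞) ^ θ) (B.encard * (A.encard : ℝ≥0∞) ^ θ) := by
  rw [mul_min]
  refine le_min ?_ ?_
  · calc _ ≤ ∑' _ : A, K * (B.encard : ℝ≥0∞) ^ θ :=
          ENNReal.tsum_le_tsum fun x => tsum_subtype_le_encard_rpow hθ (hrow x) B
      _ = _ := by rw [ENNReal.tsum_set_const]; ring
  · calc _ = ∑' y : B, ∑' x : A, κ x y := ENNReal.tsum_comm
      _ ≤ ∑' _ : B, K * (A.encard : ℝ≥0∞) ^ θ :=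
          ENNReal.tsum_le_tsum fun y => tsum_subtype_le_encard_rpow hθ (hcol y) A
      _ = _ := by rw [ENNReal.tsum_set_const]; ring

def dyadicLayer (F : X → ℝ≥0∞) (m : ℤ) : Set X := {x | F x ≠ 0 ∧ dyadicLevel (F x) = m}

lemma le_tsum_indicator_dyadicLayer (F : X → ℝ≥0∞) {x : X} (htop : F x ≠ ⊤) :
    F x ≤ ∑' m : ℤ, (dyadicLayer F m).indicator (fun _ => 2 ^ ((m : ℝ) + 1)) x := by
  by_cases h0 : F x = 0
  · simp [h0]
  refine (lt_two_rpow_dyadicLevel_add_one htop).le.trans ?_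
  refine le_of_eq_of_le ?_ (ENNReal.le_tsum (dyadicLevel (F x)))
  rw [Set.indicator_of_mem (show x ∈ dyadicLayer F (dyadicLevel (F x)) from ⟨h0, rfl⟩)]

lemma tsum_two_rpow_mul_encard_dyadicLayer_le (F : X → ℝ≥0∞) {r : ℝ} (hr : 0 ≤ r) :
    ∑' m : ℤ, (2 : ℝ≥0∞) ^ ((m : ℝ) * r) * (dyadicLayer F m).encard ≤ ∑' x, F x ^ r := by
  rw [← ENNReal.tsum_fiberwise _ fun x => dyadicLevel (F x)]
  refine ENNReal.tsum_le_tsum fun m => ?_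
  calc _ = ∑' _ : dyadicLayer F m, (2 : ℝ≥0∞) ^ ((m : ℝ) * r) := by
        rw [ENNReal.tsum_set_const, mul_comm]
    _ ≤ ∑' x : dyadicLayer F m, F x ^ r := by
        refine ENNReal.tsum_le_tsum fun x => ?_
        obtain ⟨hx0, hxm⟩ := x.2
        calc (2 : ℝ≥0∞) ^ ((m : ℝ) * r) = (2 ^ (dyadicLevel (F x) : ℝ)) ^ r := by
              rw [hxm, ENNReal.rpow_mul]
          _ ≤ F x ^ r := ENNReal.rpow_le_rpow (two_rpow_dyadicLevel_le hx0) hr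
    _ ≤ _ := ENNReal.tsum_mono_subtype (fun x => F x ^ r) fun x hx => hx.2

lemma tsum_tsum_mul_tsum_mul_tsum {ι : Type*} (f g : ι → X → ℝ≥0∞) :
    ∑' x, ∑' y, κ x y * (∑' m, f m x) * (∑' n, g n y) =
      ∑' m, ∑' n, ∑' x, ∑' y, κ x y * f m x * g n y := by
  have expand : ∀ x y, κ x y * (∑' m, f m x) * (∑' n, g n y) =
      ∑' m, ∑' n, κ x y * f m x * g n y := fun x y => by
    simp_rw [← ENNReal.tsum_mul_left, ← ENNReal.tsum_mul_right]
    exact ENNReal.tsum_comm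
  simp only [expand, ENNReal.tsum_comm (α := X) (β := ι)]

lemma tsum_tsum_mul_indicator_mul_indicator (A B : Set X) (c d : ℝ≥0∞) :
    ∑' x, ∑' y, κ x y * A.indicator (fun _ => c) x * B.indicator (fun _ => d) y =
      c * d * ∑' x : A, ∑' y : B, κ x y := by
  rw [_root_.tsum_subtype A fun x => ∑' y : B, κ x y, ← ENNReal.tsum_mul_left]
  congr 1
  ext x
  by_cases hx : x ∈ A
  · simp only [Set.indicator_of_mem hx]
    rw [_root_.tsum_subtype B, ← ENNReal.tsum_mul_left]
    congr 1
    ext y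
    by_cases hy : y ∈ B
    · simp only [Set.indicator_of_mem hy]
      ring
    · simp [hy]
  · simp [hx]

theorem tsum_tsum_mul_le_of_tsum_rpow_le_one {r s : ℝ} (hr : 1 < r) (hs : 1 < s)
    (hθ : 0 ≤ θ) (hrs : r⁻¹ + s⁻¹ = 1 + θ)
    (hrow : ∀ x (T : Finset X), ∑ y ∈ T, κ x y ≤ K * (#T : ℝ≥0∞) ^ θ)
    (hcol : ∀ y (T : Finset X), ∑ x ∈ T, κ x y ≤ K * (#T : ℝ≥0∞) ^ θ)
    {F G : X → ℝ≥0∞} (hF : ∑' x, F x ^ r ≤ 1) (hG : ∑' y, G y ^ s ≤ 1) :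
    ∑' x, ∑' y, κ x y * F x * G y ≤
      4 * K * ((1 - 2 ^ (-(s * (1 - r⁻¹))))⁻¹ + (1 - 2 ^ (-(r * (1 - s⁻¹))))⁻¹) := by
  have ne_top : ∀ {p : ℝ} {H : X → ℝ≥0∞}, 0 < p → ∑' x, H x ^ p ≤ 1 → ∀ x, H x ≠ ⊤ :=
    fun hp hH x htop => by
      simpa [htop, ENNReal.top_rpow_of_pos hp] using (ENNReal.le_tsum x).trans hH
  set A := dyadicLayer F
  set B := dyadicLayer G
  calc _ ≤ ∑' x, ∑' y, κ x y * (∑' m : ℤ, (A m).indicator (fun _ => 2 ^ ((m : ℝ) + 1)) x) *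
          (∑' n : ℤ, (B n).indicator (fun _ => 2 ^ ((n : ℝ) + 1)) y) := by
        gcongr with x y
        · exact le_tsum_indicator_dyadicLayer F (ne_top (by linarith) hF x)
        · exact le_tsum_indicator_dyadicLayer G (ne_top (by linarith) hG y)
    _ = ∑' m : ℤ, ∑' n : ℤ, 2 ^ ((m : ℝ) + 1) * 2 ^ ((n : ℝ) + 1) *
          ∑' x : A m, ∑' y : B n, κ x y := by
        simp_rw [tsum_tsum_mul_tsum_mul_tsum, tsum_tsum_mul_indicator_mul_indicator]
    _ ≤ ∑' m : ℤ, ∑' n : ℤ, 2 ^ ((m : ℝ) + 1) * 2 ^ ((n : ℝ) + 1) *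
          (K * min ((A m).encard * ((B n).encard : ℝ≥0∞) ^ θ)
            ((B n).encard * ((A m).encard : ℝ≥0∞) ^ θ)) := by
        gcongr with m n
        exact tsum_tsum_subtype_le_min hθ hrow hcol _ _
    _ = 4 * K * ∑' m : ℤ, ∑' n : ℤ, 2 ^ (m : ℝ) * 2 ^ (n : ℝ) *
          min ((A m).encard * ((B n).encard : ℝ≥0∞) ^ θ)
            ((B n).encard * ((A m).encard : ℝ≥0∞) ^ θ) := by
        simp_rw [← ENNReal.tsum_mul_left]
        refine tsum_congr fun m => tsum_congr fun n => ?_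
        rw [two_rpow_add, two_rpow_add, ENNReal.rpow_one]
        ring
    _ ≤ _ := by
        gcongr
        exact tsum_tsum_two_rpow_mul_min_le hr hs hθ hrs _ _
          ((tsum_two_rpow_mul_encard_dyadicLayer_le F (by linarith)).trans hF)
          ((tsum_two_rpow_mul_encard_dyadicLayer_le G (by linarith)).trans hG)

lemma tsum_rpow_div_eq_one {F : X → ℝ≥0∞} {r : ℝ} (hr : 0 < r)
    (h0 : ∑' x, F x ^ r ≠ 0) (htop : ∑' x, F x ^ r ≠ ⊤) :
    ∑' x, (F x / (∑' x, F x ^ r) ^ r⁻¹) ^ r = 1 := by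
  simp_rw [ENNReal.div_rpow_of_nonneg _ _ hr.le, ENNReal.rpow_inv_rpow hr.ne', div_eq_mul_inv,
    ENNReal.tsum_mul_right]
  exact ENNReal.mul_inv_cancel h0 htop

lemma eq_zero_of_tsum_rpow_eq_zero {F : X → ℝ≥0∞} {r : ℝ} (hr : 0 < r) (h : ∑' x, F x ^ r = 0)
    (x : X) : F x = 0 := by
  have := ENNReal.tsum_eq_zero.mp h x
  rw [ENNReal.rpow_eq_zero_iff] at this
  rcases this with ⟨hx, -⟩ | ⟨-, hr'⟩
  · exact hx
  · linarith

theorem tsum_tsum_mul_le_of_forall_tsum_rpow_le_one {r s : ℝ} (hr : 0 < r) (hs : 0 < s)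
    {C : ℝ≥0∞} (h : ∀ F G : X → ℝ≥0∞, ∑' x, F x ^ r ≤ 1 → ∑' y, G y ^ s ≤ 1 →
      ∑' x, ∑' y, κ x y * F x * G y ≤ C)
    {F G : X → ℝ≥0∞} (hF : ∑' x, F x ^ r ≠ ⊤) (hG : ∑' y, G y ^ s ≠ ⊤) :
    ∑' x, ∑' y, κ x y * F x * G y ≤ C * (∑' x, F x ^ r) ^ r⁻¹ * (∑' y, G y ^ s) ^ s⁻¹ := by
  rcases eq_or_ne (∑' x, F x ^ r) 0 with hF0 | hF0
  · simp [eq_zero_of_tsum_rpow_eq_zero hr hF0]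
  rcases eq_or_ne (∑' y, G y ^ s) 0 with hG0 | hG0
  · simp [eq_zero_of_tsum_rpow_eq_zero hs hG0]
  set a := (∑' x, F x ^ r) ^ r⁻¹
  set b := (∑' y, G y ^ s) ^ s⁻¹
  have ha0 : a ≠ 0 := by simp [a, ENNReal.rpow_eq_zero_iff, hF0, hF, hr]
  have hatop : a ≠ ⊤ := by simp [a, ENNReal.rpow_eq_top_iff, hF0, hF, hr]
  have hb0 : b ≠ 0 := by simp [b, ENNReal.rpow_eq_zero_iff, hG0, hG, hs]
  have hbtop : b ≠ ⊤ := by simp [b, ENNReal.rpow_eq_top_iff, hG0, hG, hs]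
  calc _ = ∑' x, ∑' y, κ x y * (a * (F x / a)) * (b * (G y / b)) := by
        simp_rw [ENNReal.mul_div_cancel ha0 hatop, ENNReal.mul_div_cancel hb0 hbtop]
    _ = a * b * ∑' x, ∑' y, κ x y * (F x / a) * (G y / b) := by
        simp_rw [← ENNReal.tsum_mul_left]
        exact tsum_congr fun x => tsum_congr fun y => by ring
    _ ≤ a * b * C := by
        gcongr
        exact h _ _ (tsum_rpow_div_eq_one hr hF0 hF).le
          (tsum_rpow_div_eq_one hs hG0 hG).le
    _ = _ := by ring

lemma lpNorm_nonneg (q : ℝ) (u : X → ℝ) : 0 ≤ lpNorm q u :=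
  Real.rpow_nonneg (tsum_nonneg fun _ => by positivity) _

lemma tsum_ofReal_abs_rpow_eq {q : ℝ} (hq : 0 ≤ q) {u : X → ℝ} (hu : Memlp q u) :
    ∑' x, ENNReal.ofReal |u x| ^ q = ENNReal.ofReal (∑' x, |u x| ^ q) := by
  simp_rw [ENNReal.ofReal_rpow_of_nonneg (abs_nonneg _) hq]
  exact (ENNReal.ofReal_tsum_of_nonneg (fun x => by positivity) hu).symm

lemma ofReal_lpNorm {q : ℝ} (hq : 0 < q) {u : X → ℝ} (hu : Memlp q u) :
    ENNReal.ofReal (lpNorm q u) = (∑' x, ENNReal.ofReal |u x| ^ q) ^ q⁻¹ := by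
  rw [tsum_ofReal_abs_rpow_eq hq.le hu,
    ENNReal.ofReal_rpow_of_nonneg (tsum_nonneg fun _ => by positivity) (inv_nonneg.mpr hq.le),
    lpNorm, one_div]

lemma ofReal_tsum_le_tsum_ofReal {ι : Type*} {f : ι → ℝ} (hf : ∀ i, 0 ≤ f i) :
    ENNReal.ofReal (∑' i, f i) ≤ ∑' i, ENNReal.ofReal (f i) := by
  by_cases h : Summable f
  · exact (ENNReal.ofReal_tsum_of_nonneg hf h).le
  · simp [tsum_eq_zero_of_not_summable h]

lemma tsum_tsum_le_toReal {ι ι' : Type*} {a : ι → ι' → ℝ} (ha : ∀ i j, 0 ≤ a i j) {B : ℝ≥0∞}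
    (hB : B ≠ ⊤) (h : ∑' i, ∑' j, ENNReal.ofReal (a i j) ≤ B) : ∑' i, ∑' j, a i j ≤ B.toReal := by
  rw [← ENNReal.ofReal_le_iff_le_toReal hB]
  calc _ ≤ ∑' i, ENNReal.ofReal (∑' j, a i j) :=
        ofReal_tsum_le_tsum_ofReal fun i => tsum_nonneg (ha i)
    _ ≤ ∑' i, ∑' j, ENNReal.ofReal (a i j) :=
        ENNReal.tsum_le_tsum fun i => ofReal_tsum_le_tsum_ofReal (ha i)
    _ ≤ B := h

theorem tsum_tsum_mul_abs_le {r s : ℝ} (hr : 0 < r) (hs : 0 < s)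
    {C : ℝ≥0∞} (hC : C ≠ ⊤) (hκ : ∀ F G : X → ℝ≥0∞, ∑' x, F x ^ r ≤ 1 → ∑' y, G y ^ s ≤ 1 →
      ∑' x, ∑' y, κ x y * F x * G y ≤ C)
    {R : X → X → ℝ} (hR : ∀ x y, 0 ≤ R x y) (hRκ : ∀ x y, ENNReal.ofReal (R x y) ≤ κ x y)
    {f g : X → ℝ} (hf : Memlp r f) (hg : Memlp s g) :
    ∑' x, ∑' y, R x y * |f x| * |g y| ≤ C.toReal * lpNorm r f * lpNorm s g := by
  have hbound := tsum_tsum_mul_le_of_forall_tsum_rpow_le_one hr hs hκ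
    (F := fun x => ENNReal.ofReal |f x|) (G := fun y => ENNReal.ofReal |g y|)
    (by rw [tsum_ofReal_abs_rpow_eq hr.le hf]; exact ENNReal.ofReal_ne_top)
    (by rw [tsum_ofReal_abs_rpow_eq hs.le hg]; exact ENNReal.ofReal_ne_top)
  rw [← ofReal_lpNorm hr hf, ← ofReal_lpNorm hs hg] at hbound
  have hB : C * ENNReal.ofReal (lpNorm r f) * ENNReal.ofReal (lpNorm s g) ≠ ⊤ := by
    simp [ENNReal.mul_ne_top, hC]
  refine (tsum_tsum_le_toReal (fun x y => by have := hR x y; positivity) hB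
    (le_trans (ENNReal.tsum_le_tsum fun x => ENNReal.tsum_le_tsum fun y => ?_) hbound)).trans_eq ?_
  · rw [ENNReal.ofReal_mul (by have := hR x y; positivity), ENNReal.ofReal_mul (hR x y)]
    gcongr
    exact hRκ x y
  · simp [ENNReal.toReal_mul, lpNorm_nonneg]

theorem exists_tsum_tsum_mul_abs_le (hK : K ≠ ⊤) {r s : ℝ}
    (hr : 1 < r) (hs : 1 < s) (hθ : 0 ≤ θ) (hrs : r⁻¹ + s⁻¹ = 1 + θ)
    (hrow : ∀ x (T : Finset X), ∑ y ∈ T, κ x y ≤ K * (#T : ℝ≥0∞) ^ θ)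
    (hcol : ∀ y (T : Finset X), ∑ x ∈ T, κ x y ≤ K * (#T : ℝ≥0∞) ^ θ)
    {R : X → X → ℝ} (hR : ∀ x y, 0 ≤ R x y) (hRκ : ∀ x y, ENNReal.ofReal (R x y) ≤ κ x y) :
    ∃ C : ℝ, 0 < C ∧ ∀ f g : X → ℝ, Memlp r f → Memlp s g →
      ∑' x, ∑' y, R x y * |f x| * |g y| ≤ C * lpNorm r f * lpNorm s g := by
  have hc₁ : 0 < s * (1 - r⁻¹) := mul_pos (by linarith) (sub_pos.mpr (inv_lt_one_of_one_lt₀ hr))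
  have hc₂ : 0 < r * (1 - s⁻¹) := mul_pos (by linarith) (sub_pos.mpr (inv_lt_one_of_one_lt₀ hs))
  have h₁ := inv_one_sub_two_rpow_ne_top (neg_neg_of_pos hc₁)
  have h₂ := inv_one_sub_two_rpow_ne_top (neg_neg_of_pos hc₂)
  set C := 4 * K * ((1 - 2 ^ (-(s * (1 - r⁻¹))))⁻¹ + (1 - 2 ^ (-(r * (1 - s⁻¹))))⁻¹)
  refine ⟨C.toReal + 1, by positivity, fun f g hf hg => ?_⟩
  calc _ ≤ C.toReal * lpNorm r f * lpNorm s g :=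
        tsum_tsum_mul_abs_le (by linarith) (by linarith) (by finiteness)
          (fun F G hF hG => tsum_tsum_mul_le_of_tsum_rpow_le_one hr hs hθ hrs hrow hcol hF hG)
          hR hRκ hf hg
    _ ≤ _ := by
        have := lpNorm_nonneg r f
        have := lpNorm_nonneg s g
        gcongr
        linarith

end Bilinear

section WordMetric

variable [Group G]

lemma wordDist_eq_wordDist_one (S : Finset G) (x y : G) :
    wordDist S x y = wordDist S 1 (x⁻¹ * y) := by
  unfold wordDist
  congr 1
  ext k
  refine exists_congr fun l => and_congr_right' (and_congr_right' ?_)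
  rw [one_mul, inv_mul_eq_iff_eq_mul]

lemma finite_setOf_wordDist_le {S : Finset G} {N n : ℕ} {C₁ : ℝ} (hC₁ : 0 < C₁) (hn : 1 ≤ n)
    (h : C₁ * (n : ℝ) ^ N ≤ Nat.card {x : G // wordDist S 1 x ≤ n}) :
    {x : G | wordDist S 1 x ≤ n}.Finite := by
  have hn' : (0 : ℝ) < n := by exact_mod_cast hn
  have hpos : (0 : ℝ) < Nat.card {x : G // wordDist S 1 x ≤ n} := lt_of_lt_of_le (by positivity) h
  exact Set.finite_coe_iff.mp (Nat.finite_of_card_ne_zero (by exact_mod_cast hpos.ne'))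

lemma card_filter_wordDist_le_natCard (S : Finset G) {φ : G → G} (hφ : Function.Injective φ)
    (T : Finset G) {n : ℕ} (hfin : {x : G | wordDist S 1 x ≤ n}.Finite) :
    #{y ∈ T | wordDist S 1 (φ y) ≤ n} ≤ Nat.card {x : G // wordDist S 1 x ≤ n} := by
  rw [← Set.ncard_coe_finset]
  calc _ ≤ {x : G | wordDist S 1 x ≤ n}.ncard :=
        Set.ncard_le_ncard_of_injOn φ (fun y hy => (mem_filter.mp hy).2) hφ.injOn hfin
    _ = _ := (Nat.card_coe_set_eq _).symm

lemma sum_ofReal_mul_wordDist_rpow_le {S : Finset G} {N : ℕ} {C₂ : ℝ}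
    (hfin : ∀ n : ℕ, 1 ≤ n → {x : G | wordDist S 1 x ≤ n}.Finite)
    (hcard : ∀ n : ℕ, 1 ≤ n → (Nat.card {x : G // wordDist S 1 x ≤ n} : ℝ) ≤ C₂ * (n : ℝ) ^ N)
    {α : ℝ} (hα : 0 < α) (hαN : α < N) (c : ℝ) {φ : G → G} (hφ : Function.Injective φ)
    (T : Finset G) :
    ∑ y ∈ T, ENNReal.ofReal (c * (wordDist S 1 (φ y) : ℝ) ^ (α - N)) ≤
      ENNReal.ofReal c * (ENNReal.ofReal C₂ * 2 ^ N * (1 - 2 ^ (-α))⁻¹ + (1 - 2 ^ (α - N))⁻¹) *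
        (#T : ℝ≥0∞) ^ (α / N) := by
  simp_rw [ENNReal.ofReal_mul' (Real.rpow_nonneg (Nat.cast_nonneg _) _), ← mul_sum]
  rw [mul_assoc (ENNReal.ofReal c)]
  gcongr
  refine sum_ofReal_rpow_le_of_card_le hα hαN (fun y => wordDist S 1 (φ y)) T _ fun n hn => ?_
  calc (#{y ∈ T | wordDist S 1 (φ y) ≤ n} : ℝ≥0∞)
      ≤ ENNReal.ofReal (Nat.card {x : G // wordDist S 1 x ≤ n}) := by
        rw [ENNReal.ofReal_natCast]
        exact_mod_cast card_filter_wordDist_le_natCard S hφ T (hfin n hn)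
    _ ≤ ENNReal.ofReal (C₂ * (n : ℝ) ^ N) := ENNReal.ofReal_le_ofReal (hcard n hn)
    _ = _ := by rw [ENNReal.ofReal_mul' (by positivity), ENNReal.ofReal_pow (by positivity),
      ENNReal.ofReal_natCast]

end WordMetric

theorem discrete_HLS_inequality_general
    [Group G] [DecidableEq G]
    (S : Finset G)
    (N : ℕ)
    (C₁ C₂ : ℝ) (hC₁ : 0 < C₁)
    (hgrowth : ∀ n : ℕ, 1 ≤ n →
      C₁ * (n : ℝ) ^ N ≤ (Nat.card {x : G // wordDist S 1 x ≤ n} : ℝ) ∧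
      (Nat.card {x : G // wordDist S 1 x ≤ n} : ℝ) ≤ C₂ * (n : ℝ) ^ N)
    (α : ℝ) (hα : 0 < α) (hαN : α < N)
    (Rα : G → G → ℝ) (hR_nonneg : ∀ x y, 0 ≤ Rα x y)
    (c₂ : ℝ)
    (hR_up : ∀ x y : G, x ≠ y → Rα x y ≤ c₂ * (wordDist S x y : ℝ) ^ (α - (N : ℝ)))
    (r s : ℝ) (hr : 1 < r) (hs : 1 < s)
    (hrs : 1 / r + 1 / s + ((N : ℝ) - α) / (N : ℝ) = 2) :
    ∃ C : ℝ, 0 < C ∧ ∀ f g : G → ℝ, Memlp r f → Memlp s g →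
      (∑' x : G, ∑' y : G, if x = y then 0 else Rα x y * |f x| * |g y|) ≤
        C * lpNorm r f * lpNorm s g := by
  have hfin n hn := finite_setOf_wordDist_le hC₁ hn (hgrowth n hn).1
  have hcard n hn := (hgrowth n hn).2
  have hθ : r⁻¹ + s⁻¹ = 1 + α / N := by
    have : ((N : ℝ) - α) / N = 1 - α / N := by rw [sub_div, div_self (hα.trans hαN).ne']
    rw [← one_div, ← one_div]
    linarith
  have h₁ := inv_one_sub_two_rpow_ne_top (neg_neg_of_pos hα)
  have h₂ := inv_one_sub_two_rpow_ne_top (sub_neg.mpr hαN)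
  obtain ⟨C, hC, hHLS⟩ := exists_tsum_tsum_mul_abs_le
    (κ := fun x y => ENNReal.ofReal (c₂ * (wordDist S x y : ℝ) ^ (α - N)))
    (K := ENNReal.ofReal c₂ * (ENNReal.ofReal C₂ * 2 ^ N * (1 - 2 ^ (-α))⁻¹ + (1 - 2 ^ (α - N))⁻¹))
    (by finiteness) hr hs (by positivity) hθ
    (fun x T => by
      simpa only [wordDist_eq_wordDist_one S x] using
        sum_ofReal_mul_wordDist_rpow_le hfin hcard hα hαN c₂ (mul_right_injective x⁻¹) T)
    (fun y T => by
      simpa only [wordDist_eq_wordDist_one S _ y] using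
        sum_ofReal_mul_wordDist_rpow_le hfin hcard hα hαN c₂ (φ := (·⁻¹ * y))
          (fun a b h => inv_injective (mul_right_cancel h)) T)
    (R := fun x y => if x = y then 0 else Rα x y) (fun x y => by split_ifs <;> simp [hR_nonneg])
    (fun x y => by
      split_ifs with hxy
      · simp
      · exact ENNReal.ofReal_le_ofReal (hR_up x y hxy))
  refine ⟨C, hC, fun f g hf hg => ?_⟩
  simpa only [ite_mul, zero_mul] using hHLS f g hf hg

theorem discrete_HLS_inequality
    [Group G] [Countable G] [DecidableEq G]
    (S : Finset G) (hS_gen : Subgroup.closure (S : Set G) = ⊤)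
    (hS_sym : ∀ s ∈ S, s⁻¹ ∈ S) (hS_e : (1 : G) ∉ S)
    (N : ℕ) (hN : 3 ≤ N)
    (C₁ C₂ : ℝ) (hC₁ : 0 < C₁) (hC₂ : 0 < C₂)
    (hgrowth : ∀ n : ℕ, 1 ≤ n →
      C₁ * (n : ℝ) ^ N ≤ (Nat.card {x : G // wordDist S 1 x ≤ n} : ℝ) ∧
      (Nat.card {x : G // wordDist S 1 x ≤ n} : ℝ) ≤ C₂ * (n : ℝ) ^ N)
    (α : ℝ) (hα : 0 < α) (hαN : α < N)
    (Rα : G → G → ℝ) (hR_nonneg : ∀ x y, 0 ≤ Rα x y)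
    (hR_symm : ∀ x y, Rα x y = Rα y x)
    (c₁ c₂ : ℝ) (hc₁ : 0 < c₁) (hc₂ : 0 < c₂)
    (hR_low : ∀ x y : G, x ≠ y → c₁ * (wordDist S x y : ℝ) ^ (α - (N : ℝ)) ≤ Rα x y)
    (hR_up : ∀ x y : G, x ≠ y → Rα x y ≤ c₂ * (wordDist S x y : ℝ) ^ (α - (N : ℝ)))
    (hR_diag : ∀ x : G, Rα x x ≤ c₂)
    (r s : ℝ) (hr : 1 < r) (hs : 1 < s)
    (hrs : 1 / r + 1 / s + ((N : ℝ) - α) / (N : ℝ) = 2) :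
    ∃ C : ℝ, 0 < C ∧ ∀ f g : G → ℝ, Memlp r f → Memlp s g →
      (∑' x : G, ∑' y : G, if x = y then 0 else Rα x y * |f x| * |g y|) ≤
        C * lpNorm r f * lpNorm s g :=
  discrete_HLS_inequality_general S N C₁ C₂ hC₁ hgrowth α hα hαN Rα hR_nonneg c₂ hR_up r s hr hs hrs

end Choquard
end
end

section
/- (Brézis–Lieb lemma for discrete gradients.) Let Ω ⊆ G, 1 ≤ p < ∞, and let {u_n} ⊂ D^{1,p}(G) be a sequence that is uniformly bounded in the D^{1,p} norm and converges pointwise on G to a function u. Then lim_{n→∞} ( ∑_{x∈Ω} |∇u_n(x)|_p^p − ∑_{x∈Ω} |∇(u_n−u)(x)|_p^p ) = ∑_{x∈Ω} |∇u(x)|_p^p. -/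
open Filter Topology

noncomputable section

namespace Choquard

variable {G : Type*}

/-! For `ε > 0` one has `||a + b|^p - |a|^p| ≤ ε |a|^p + C_ε |b|^p`. Applied with
`a = aₙ - b`, the defect `|aₙ|^p - |aₙ - b|^p - |b|^p` exceeds `ε |aₙ - b|^p` by at most
`(C_ε + 1) |b|^p`, a summable bound independent of `n`; dominated convergence kills that excess,
and the remaining `ε ∑ |aₙ - b|^p` is `O(ε)` because `aₙ` is bounded in `ℓ^p`. The discrete
gradient is the family of edge differences `u(x s) - u(x)`, `(x, s) ∈ Ω × S`, so the theorem is
this `ℓ^p` statement over the index type `Ω × S`. -/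

lemma abs_sub_rpow_le {p : ℝ} (hp : 0 ≤ p) (a b : ℝ) :
    |a - b| ^ p ≤ 2 ^ p * (|a| ^ p + |b| ^ p) := by
  have hmax : |a - b| ≤ 2 * max |a| |b| := by
    linarith [abs_sub a b, le_max_left |a| |b|, le_max_right |a| |b|]
  calc |a - b| ^ p ≤ (2 * max |a| |b|) ^ p := by gcongr
    _ = 2 ^ p * max |a| |b| ^ p := Real.mul_rpow zero_le_two (by positivity)
    _ ≤ 2 ^ p * (|a| ^ p + |b| ^ p) := by
        gcongr
        rcases max_choice |a| |b| with h | h <;> rw [h] <;> simp only [le_add_iff_nonneg_right,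
          le_add_iff_nonneg_left] <;> positivity

lemma exists_abs_add_rpow_sub_rpow_le {p : ℝ} (hp : 0 < p) {ε : ℝ} (hε : 0 < ε) :
    ∃ C, 0 ≤ C ∧ ∀ a b : ℝ, |(|a + b| ^ p - |a| ^ p)| ≤ ε * |a| ^ p + C * |b| ^ p := by
  have hcont : ContinuousAt (fun t : ℝ => |1 + t| ^ p) 0 :=
    ((continuous_const.add continuous_id).abs.rpow_const fun _ => Or.inr hp.le).continuousAt
  obtain ⟨δ, hδ, hclose⟩ := Metric.continuousAt_iff.mp hcont ε hε
  refine ⟨(δ⁻¹ + 1) ^ p + δ⁻¹ ^ p, by positivity, fun a b => ?_⟩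
  rcases lt_or_ge |b| (δ * |a|) with hsmall | hlarge
  · -- `b` is a small perturbation of `a`: use continuity of `t ↦ |1 + t|^p` at `t = b / a`
    have ha : a ≠ 0 := by
      rintro rfl
      simp only [abs_zero, mul_zero] at hsmall
      exact (abs_nonneg b).not_gt hsmall
    have hquot : |b / a| < δ := by
      rwa [abs_div, div_lt_iff₀ (abs_pos.2 ha)]
    have hnear : |(|1 + b / a| ^ p - 1)| < ε := by
      simpa only [Real.dist_eq, add_zero, abs_one, Real.one_rpow] using
        hclose (x := b / a) (by rwa [Real.dist_eq, sub_zero])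
    have hfactor : |a + b| ^ p = |a| ^ p * |1 + b / a| ^ p := by
      rw [← Real.mul_rpow (abs_nonneg _) (abs_nonneg _), ← abs_mul, mul_add, mul_one,
        mul_div_cancel₀ _ ha]
    calc |(|a + b| ^ p - |a| ^ p)| = |a| ^ p * |(|1 + b / a| ^ p - 1)| := by
          rw [hfactor, ← mul_sub_one, abs_mul, abs_of_nonneg (by positivity)]
      _ ≤ |a| ^ p * ε := by gcongr
      _ ≤ ε * |a| ^ p + ((δ⁻¹ + 1) ^ p + δ⁻¹ ^ p) * |b| ^ p := by
          rw [mul_comm]; exact le_add_of_nonneg_right (by positivity)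
  · -- `a` is controlled by `b`: bound both terms crudely
    have ha : |a| ≤ δ⁻¹ * |b| := by
      rw [inv_mul_eq_div, le_div_iff₀ hδ, mul_comm]; exact hlarge
    have hsum : |a + b| ^ p ≤ (δ⁻¹ + 1) ^ p * |b| ^ p := by
      rw [← Real.mul_rpow (by positivity) (abs_nonneg _)]
      gcongr
      linarith [abs_add_le a b]
    have hfirst : |a| ^ p ≤ δ⁻¹ ^ p * |b| ^ p := by
      rw [← Real.mul_rpow (by positivity) (abs_nonneg _)]
      gcongr
    have hab₀ : 0 ≤ |a + b| ^ p := by positivity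
    have ha₀ : 0 ≤ |a| ^ p := by positivity
    have hb₀ : 0 ≤ |b| ^ p := by positivity
    rw [abs_sub_le_iff]
    constructor <;> nlinarith

lemma summable_and_tsum_le_of_tendsto {ι α : Type*} {l : Filter α} [l.NeBot]
    {f : α → ι → ℝ} {g : ι → ℝ} {M : ℝ} (hf₀ : ∀ n i, 0 ≤ f n i) (hf : ∀ n, Summable (f n))
    (hM : ∀ n, ∑' i, f n i ≤ M) (hfg : ∀ i, Tendsto (f · i) l (𝓝 (g i))) :
    Summable g ∧ ∑' i, g i ≤ M := by
  have hg₀ : 0 ≤ g := fun i => ge_of_tendsto' (hfg i) fun n => hf₀ n i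
  have hfin : ∀ F : Finset ι, ∑ i ∈ F, g i ≤ M := fun F =>
    le_of_tendsto' (tendsto_finsetSum F fun i _ => hfg i) fun n =>
      ((hf n).sum_le_tsum F fun i _ => hf₀ n i).trans (hM n)
  exact ⟨summable_of_sum_le hg₀ hfin, Real.tsum_le_of_sum_le hg₀ hfin⟩

lemma tendsto_nhds_zero_of_forall_abs_le {α : Type*} {l : Filter α} {d : α → ℝ} (K : ℝ)
    (h : ∀ ε > 0, ∃ w : α → ℝ, Tendsto w l (𝓝 0) ∧ ∀ n, |d n| ≤ w n + ε * K) :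
    Tendsto d l (𝓝 0) := by
  rw [Metric.tendsto_nhds]
  intro δ hδ
  obtain ⟨w, hw, hdw⟩ := h (δ / (2 * (|K| + 1))) (by positivity)
  have hsmall : δ / (2 * (|K| + 1)) * K < δ / 2 := by
    rw [div_mul_eq_mul_div, div_lt_iff₀ (by positivity)]
    nlinarith [le_abs_self K]
  filter_upwards [Metric.tendsto_nhds.1 hw (δ / 2) (by positivity)] with n hn
  rw [Real.dist_eq, sub_zero] at hn ⊢
  linarith [hdw n, le_abs_self (w n)]

lemma summable_abs_sub_rpow {ι : Type*} {p : ℝ} (hp : 0 ≤ p) {f g : ι → ℝ}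
    (hf : Summable fun i => |f i| ^ p) (hg : Summable fun i => |g i| ^ p) :
    Summable fun i => |f i - g i| ^ p :=
  .of_nonneg_of_le (fun _ => by positivity) (fun i => abs_sub_rpow_le hp _ _)
    ((hf.add hg).mul_left _)

lemma abs_rpow_sub_rpow_sub_rpow_le {p ε C : ℝ}
    (hC : ∀ a b : ℝ, |(|a + b| ^ p - |a| ^ p)| ≤ ε * |a| ^ p + C * |b| ^ p) (x y : ℝ) :
    |(|x| ^ p - |x - y| ^ p - |y| ^ p)| ≤ ε * |x - y| ^ p + (C + 1) * |y| ^ p := by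
  have h := hC (x - y) y
  rw [sub_add_cancel] at h
  have hy : 0 ≤ |y| ^ p := by positivity
  linarith [abs_sub (|x| ^ p - |x - y| ^ p) (|y| ^ p), abs_of_nonneg hy]

lemma exists_abs_tsum_defect_le {ι : Type*} {p : ℝ} (hp : 0 < p) {a : ℕ → ι → ℝ} {b : ι → ℝ}
    (hsum : ∀ n, Summable fun i => |a n i| ^ p) (hb : Summable fun i => |b i| ^ p)
    (hab : ∀ i, Tendsto (a · i) atTop (𝓝 (b i))) {ε : ℝ} (hε : 0 < ε) :
    ∃ w : ℕ → ℝ, Tendsto w atTop (𝓝 0) ∧ ∀ n,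
      |∑' i, |a n i| ^ p - ∑' i, |a n i - b i| ^ p - ∑' i, |b i| ^ p|
        ≤ w n + ε * ∑' i, |a n i - b i| ^ p := by
  have hφ : Continuous fun t : ℝ => |t| ^ p := continuous_abs.rpow_const fun _ => Or.inr hp.le
  have hdiff : ∀ n, Summable fun i => |a n i - b i| ^ p := fun n =>
    summable_abs_sub_rpow hp.le (hsum n) hb
  obtain ⟨C, hC₀, hC⟩ := exists_abs_add_rpow_sub_rpow_le hp hε
  set F : ℕ → ι → ℝ := fun n i => |a n i| ^ p - |a n i - b i| ^ p - |b i| ^ p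
  -- the part of the defect not absorbed by `ε |aₙ - b|^p`, dominated by `(C + 1) |b|^p`
  set W : ℕ → ι → ℝ := fun n i => max (|F n i| - ε * |a n i - b i| ^ p) 0
  have hW_le : ∀ n i, ‖W n i‖ ≤ (C + 1) * |b i| ^ p := fun n i => by
    rw [Real.norm_of_nonneg (le_max_right _ _)]
    exact max_le (by linarith [abs_rpow_sub_rpow_sub_rpow_le hC (a n i) (b i)]) (by positivity)
  have hW_zero : ∀ i, Tendsto (W · i) atTop (𝓝 0) := fun i => by
    have hdiff_zero : Tendsto (fun n => |a n i - b i| ^ p) atTop (𝓝 0) := by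
      simpa [Function.comp_def, Real.zero_rpow hp.ne'] using
        (hφ.tendsto 0).comp (tendsto_sub_nhds_zero_iff.2 (hab i))
    have hF_zero : Tendsto (F · i) atTop (𝓝 0) := by
      simpa [F] using (((hφ.tendsto _).comp (hab i)).sub hdiff_zero).sub_const (|b i| ^ p)
    simpa using (hF_zero.abs.sub (hdiff_zero.const_mul ε)).max
      (tendsto_const_nhds (x := (0 : ℝ)))
  have hW_tsum : Tendsto (fun n => ∑' i, W n i) atTop (𝓝 0) := by
    simpa using tendsto_tsum_of_dominated_convergence (hb.mul_left (C + 1)) hW_zero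
      (.of_forall hW_le)
  refine ⟨fun n => ∑' i, W n i, hW_tsum, fun n => ?_⟩
  have hWs : Summable (W n) := .of_norm_bounded (hb.mul_left (C + 1)) (hW_le n)
  have hFW : ∀ i, |F n i| ≤ W n i + ε * |a n i - b i| ^ p := fun i => by
    linarith [le_max_left (|F n i| - ε * |a n i - b i| ^ p) 0]
  have hFs : Summable fun i => |F n i| :=
    .of_nonneg_of_le (fun i => abs_nonneg _) hFW (hWs.add ((hdiff n).mul_left ε))
  calc |∑' i, |a n i| ^ p - ∑' i, |a n i - b i| ^ p - ∑' i, |b i| ^ p|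
      = |∑' i, F n i| := by
        simp only [F]
        rw [((hsum n).sub (hdiff n)).tsum_sub hb, (hsum n).tsum_sub (hdiff n)]
    _ ≤ ∑' i, |F n i| := norm_tsum_le_tsum_norm (f := F n) hFs
    _ ≤ ∑' i, W n i + ε * ∑' i, |a n i - b i| ^ p := by
        rw [← tsum_mul_left, ← hWs.tsum_add ((hdiff n).mul_left ε)]
        exact hFs.tsum_le_tsum hFW (hWs.add ((hdiff n).mul_left ε))

theorem tendsto_tsum_abs_rpow_sub_tsum_abs_sub_rpow {ι : Type*} {p : ℝ} (hp : 0 < p)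
    {a : ℕ → ι → ℝ} {b : ι → ℝ} {M : ℝ} (hsum : ∀ n, Summable fun i => |a n i| ^ p)
    (hM : ∀ n, ∑' i, |a n i| ^ p ≤ M) (hab : ∀ i, Tendsto (a · i) atTop (𝓝 (b i))) :
    Tendsto (fun n => ∑' i, |a n i| ^ p - ∑' i, |a n i - b i| ^ p) atTop
      (𝓝 (∑' i, |b i| ^ p)) := by
  have hφ : Continuous fun t : ℝ => |t| ^ p := continuous_abs.rpow_const fun _ => Or.inr hp.le
  obtain ⟨hb, hbM⟩ := summable_and_tsum_le_of_tendsto (fun n i => by positivity) hsum hM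
    fun i => (hφ.tendsto _).comp (hab i)
  have hdiffM : ∀ n, ∑' i, |a n i - b i| ^ p ≤ 2 ^ p * (M + M) := fun n => by
    grw [(summable_abs_sub_rpow hp.le (hsum n) hb).tsum_le_tsum
      (fun i => abs_sub_rpow_le hp.le _ _) (((hsum n).add hb).mul_left _), tsum_mul_left,
      (hsum n).tsum_add hb, hM n, hbM]
  rw [← tendsto_sub_nhds_zero_iff]
  refine tendsto_nhds_zero_of_forall_abs_le (2 ^ p * (M + M)) fun ε hε => ?_
  obtain ⟨w, hw, hdefect⟩ := exists_abs_tsum_defect_le hp hsum hb hab hε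
  exact ⟨w, hw, fun n => (hdefect n).trans (by grw [hdiffM n])⟩

lemma summable_iff_summable_sum_of_nonneg {α β : Type*} [Fintype β] {f : α × β → ℝ}
    (hf : 0 ≤ f) : Summable f ↔ Summable fun a => ∑ b, f (a, b) := by
  simp only [summable_prod_of_nonneg hf, tsum_fintype, Summable.of_finite, implies_true,
    true_and]

lemma tsum_eq_tsum_sum_of_nonneg {α β : Type*} [Fintype β] {f : α × β → ℝ} (hf : 0 ≤ f) :
    ∑' e, f e = ∑' a, ∑ b, f (a, b) := by
  by_cases h : Summable f
  · simp only [h.tsum_prod' fun _ => .of_finite, tsum_fintype]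
  · rw [tsum_eq_zero_of_not_summable h,
      tsum_eq_zero_of_not_summable ((summable_iff_summable_sum_of_nonneg hf).not.1 h)]

section EdgeDifferences

variable [Group G] (S : Finset G) (p : ℝ) (Ω : Set G) (w : G → ℝ)

lemma summable_gradP_subtype_iff :
    Summable (fun x : Ω => gradP S p w x) ↔
      Summable fun e : Ω × S => |w (e.1 * e.2) - w e.1| ^ p := by
  rw [summable_iff_summable_sum_of_nonneg fun _ => by positivity]
  simp only [gradP, ← Finset.sum_coe_sort S]

lemma tsum_gradP_subtype_eq :
    ∑' x : Ω, gradP S p w x = ∑' e : Ω × S, |w (e.1 * e.2) - w e.1| ^ p := by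
  rw [tsum_eq_tsum_sum_of_nonneg fun _ => by positivity]
  simp only [gradP, ← Finset.sum_coe_sort S]

end EdgeDifferences

theorem brezisLieb_gradient_general
    [Group G]
    (S : Finset G)
    (Ω : Set G) (p : ℝ) (hp : 1 ≤ p)
    (u : ℕ → G → ℝ) (v : G → ℝ)
    (hbdd : ∃ M : ℝ, ∀ n, Summable (gradP S p (u n)) ∧ (∑' x, gradP S p (u n) x) ≤ M)
    (hpt : ∀ x : G, Tendsto (fun n => u n x) atTop (𝓝 (v x))) :
    Tendsto (fun n =>
        (∑' x : Ω, gradP S p (u n) (x : G)) -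
          ∑' x : Ω, gradP S p (fun z => u n z - v z) (x : G))
      atTop (𝓝 (∑' x : Ω, gradP S p v (x : G))) := by
  obtain ⟨M, hM⟩ := hbdd
  have hgrad₀ : ∀ n, 0 ≤ gradP S p (u n) := fun n x => by unfold gradP; positivity
  have hsum : ∀ n, Summable fun e : Ω × S => |u n (e.1 * e.2) - u n e.1| ^ p := fun n =>
    (summable_gradP_subtype_iff S p Ω (u n)).1 ((hM n).1.subtype Ω)
  have hbound : ∀ n, ∑' e : Ω × S, |u n (e.1 * e.2) - u n e.1| ^ p ≤ M := fun n => by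
    rw [← tsum_gradP_subtype_eq]
    exact ((hM n).1.tsum_subtype_le _ Ω (hgrad₀ n)).trans (hM n).2
  simp only [tsum_gradP_subtype_eq, sub_sub_sub_comm]
  exact tendsto_tsum_abs_rpow_sub_tsum_abs_sub_rpow (by linarith) hsum hbound
    fun e => (hpt _).sub (hpt _)

theorem brezisLieb_gradient
    [Group G] [Countable G]
    (S : Finset G) (hS_gen : Subgroup.closure (S : Set G) = ⊤)
    (hS_sym : ∀ s ∈ S, s⁻¹ ∈ S) (hS_e : (1 : G) ∉ S)
    (Ω : Set G) (p : ℝ) (hp : 1 ≤ p)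
    (u : ℕ → G → ℝ) (v : G → ℝ)
    (hbdd : ∃ M : ℝ, ∀ n, Summable (gradP S p (u n)) ∧ (∑' x, gradP S p (u n) x) ≤ M)
    (hpt : ∀ x : G, Tendsto (fun n => u n x) atTop (𝓝 (v x))) :
    Tendsto (fun n =>
        (∑' x : Ω, gradP S p (u n) (x : G)) -
          ∑' x : Ω, gradP S p (fun z => u n z - v z) (x : G))
      atTop (𝓝 (∑' x : Ω, gradP S p v (x : G))) :=
  brezisLieb_gradient_general S Ω p hp u v hbdd hpt

end Choquard
end
end
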